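/- For A ≥ 0 and Z > 0 with extremal eigenvalues a ≥ b > 0, the operator norm of AZ satisfies ‖AZ‖_∞ ≤ ((a+b)/(2√(ab)))·ρ(AZ), where ρ denotes the spectral radius. -/

import Mathlib

/-! With `s = √A`, the spectral radius `ρ` of `AZ = s (sZ)` equals that of the selfadjoint `sZs`,
i.e. `‖sZs‖`, so `AZA = s (sZs) s ≤ ρ A`. The spectral bounds `b ≤ Z ≤ a` give
`Z² ≤ (a + b) Z - ab`, hence `AZ²A ≤ (a + b) ρ A - ab A² ≤ ((a + b) ρ)² / (4ab)` by completing the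
square, and `‖AZ‖² = ‖AZ²A‖`. -/

theorem spectralRadius_mul_comm {𝕜 B : Type*} [NormedField 𝕜] [Ring B] [Algebra 𝕜 B] (x y : B) :
    spectralRadius 𝕜 (x * y) = spectralRadius 𝕜 (y * x) := by
  suffices h : ∀ x y : B, spectralRadius 𝕜 (x * y) ≤ spectralRadius 𝕜 (y * x) from
    le_antisymm (h x y) (h y x)
  intro x y
  refine iSup₂_le fun k hk => ?_
  rcases eq_or_ne k 0 with rfl | hk0
  · simp
  · have hk' : k ∈ spectrum 𝕜 (y * x) \ {0} := spectrum.nonzero_mul_comm (𝕜 := 𝕜) x y ▸ ⟨hk, hk0⟩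
    exact le_iSup₂ (f := fun k (_ : k ∈ spectrum 𝕜 (y * x)) => (‖k‖₊ : ENNReal)) k hk'.1

namespace CStarAlgebra

variable {A : Type*} [CStarAlgebra A]

theorem cfc_const_mul_sub_const_mul_sq {x : A} (hx : IsSelfAdjoint x) (p q : ℝ) :
    cfc (fun t : ℝ => p * t - q * t ^ 2) x = p • x - q • x ^ 2 := by
  rw [cfc_sub _ _ x, cfc_const_mul _ _ x, cfc_const_mul _ _ x, cfc_id' ℝ x, cfc_pow_id x]

variable [PartialOrder A] [StarOrderedRing A]

theorem mul_mul_le_spectralRadius_smul {x z : A} (hx : 0 ≤ x) (hz : IsSelfAdjoint z) :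
    x * z * x ≤ (spectralRadius ℂ (x * z)).toReal • x := by
  set s := CFC.sqrt x
  have hs : IsSelfAdjoint s := (CFC.sqrt_nonneg x).isSelfAdjoint
  have hss : s * s = x := CFC.sqrt_mul_sqrt_self x hx
  have hszs : IsSelfAdjoint (s * z * s) := hz.conjugate_self hs
  have hρ : (spectralRadius ℂ (x * z)).toReal = ‖s * z * s‖ := by
    rw [← hss, mul_assoc s s z, spectralRadius_mul_comm, hszs.spectralRadius_eq_nnnorm]
    rfl
  calc x * z * x = star s * (s * z * s) * s := by rw [hs.star_eq, ← hss]; noncomm_ring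
    _ ≤ ‖s * z * s‖ • (star s * s) := star_left_conjugate_le_norm_smul
    _ = _ := by rw [hρ, hs.star_eq, hss]

theorem algebraMap_le_smul_sub_smul_sq {x : A} (hx : IsSelfAdjoint x) {p q r : ℝ}
    (h : ∀ t ∈ spectrum ℝ x, r ≤ p * t - q * t ^ 2) :
    algebraMap ℝ A r ≤ p • x - q • x ^ 2 :=
  cfc_const_mul_sub_const_mul_sq hx p q ▸ algebraMap_le_cfc _ r x h

theorem smul_sub_smul_sq_le_algebraMap {x : A} (hx : IsSelfAdjoint x) {p q r : ℝ}
    (h : ∀ t ∈ spectrum ℝ x, p * t - q * t ^ 2 ≤ r) :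
    p • x - q • x ^ 2 ≤ algebraMap ℝ A r :=
  cfc_const_mul_sub_const_mul_sq hx p q ▸ cfc_le_algebraMap _ r x h

theorem norm_mul_le_of_spectrum_subset_Icc {x z : A} (hx : 0 ≤ x) (hz : IsSelfAdjoint z)
    {a b : ℝ} (hb : 0 < b) (hba : b ≤ a) (hspec : spectrum ℝ z ⊆ Set.Icc b a) :
    ‖x * z‖ ≤ (a + b) / (2 * √(a * b)) * (spectralRadius ℂ (x * z)).toReal := by
  set ρ := (spectralRadius ℂ (x * z)).toReal
  have hρ : 0 ≤ ρ := ENNReal.toReal_nonneg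
  have ha : 0 < a := hb.trans_le hba
  have hab : 0 < a * b := by positivity
  have hz2 : z ^ 2 ≤ (a + b) • z - algebraMap ℝ A (a * b) := by
    refine le_sub_comm.mp ?_
    simpa only [one_smul] using algebraMap_le_smul_sub_smul_sq hz (p := a + b) (q := 1)
      fun t ht => by obtain ⟨h₁, h₂⟩ := hspec ht; nlinarith
  have hx2 : x * z ^ 2 * x ≤ algebraMap ℝ A (((a + b) * ρ) ^ 2 / (4 * (a * b))) := calc
    x * z ^ 2 * x ≤ x * ((a + b) • z - algebraMap ℝ A (a * b)) * x := by
      simpa only [hx.isSelfAdjoint.star_eq] using star_left_conjugate_le_conjugate hz2 x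
    _ = (a + b) • (x * z * x) - (a * b) • x ^ 2 := by
      simp only [Algebra.algebraMap_eq_smul_one, mul_sub, sub_mul, mul_smul_comm, smul_mul_assoc,
        mul_one, sq]
    _ ≤ (a + b) • (ρ • x) - (a * b) • x ^ 2 := by
      gcongr (a + b) • ?_ - _
      exact mul_mul_le_spectralRadius_smul hx hz
    _ ≤ _ := by
      rw [smul_smul]
      refine smul_sub_smul_sq_le_algebraMap hx.isSelfAdjoint fun t _ => ?_
      rw [le_div_iff₀ (by positivity)]
      nlinarith [sq_nonneg ((a + b) * ρ - 2 * (a * b) * t)]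
  have hnorm : ‖x * z‖ ^ 2 ≤ ((a + b) * ρ) ^ 2 / (4 * (a * b)) := by
    have hnonneg : 0 ≤ x * z ^ 2 * x := by
      simpa [hz.star_eq, hx.isSelfAdjoint.star_eq, sq, mul_assoc] using star_mul_self_nonneg (z * x)
    rw [sq, ← CStarRing.norm_self_mul_star]
    simpa [hz.star_eq, hx.isSelfAdjoint.star_eq, sq, mul_assoc] using
      (norm_le_iff_le_algebraMap _ (by positivity) hnonneg).2 hx2
  refine le_of_pow_le_pow_left₀ two_ne_zero (by positivity) (hnorm.trans_eq ?_)
  rw [div_mul_eq_mul_div, div_pow, mul_pow (2 : ℝ), Real.sq_sqrt hab.le]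
  ring

end CStarAlgebra

open Matrix ComplexOrder

open scoped MatrixOrder Matrix.Norms.L2Operator in
theorem opNorm_le_spectralRadius {n : ℕ} (A Z : Matrix (Fin n) (Fin n) ℂ)
    (hA : A.PosSemidef) (hZ : Z.PosDef) (a b : ℝ)
    (ha : IsGreatest (Set.range hZ.1.eigenvalues) a)
    (hb : IsLeast (Set.range hZ.1.eigenvalues) b) :
    ‖Matrix.toEuclideanCLM (𝕜 := ℂ) (A * Z)‖ ≤
      (a + b) / (2 * Real.sqrt (a * b)) * (spectralRadius ℂ (A * Z)).toReal := by
  obtain ⟨i, hi⟩ := hb.1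
  have hspec : spectrum ℝ Z ⊆ Set.Icc b a := by
    rw [hZ.1.spectrum_real_eq_range_eigenvalues]
    exact fun t ht => ⟨hb.2 ht, ha.2 ht⟩
  exact CStarAlgebra.norm_mul_le_of_spectrum_subset_Icc hA.nonneg hZ.1
    (hi ▸ hZ.eigenvalues_pos i) (ha.2 hb.1) hspec
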